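/- arXiv:1301.6645 — 5 statements merged into one kernel-verified Lean document; each statement's English description precedes it below -/
import Mathlib

section
/- There exists a group automorphism φ of the free group F₃ = FreeGroup (Fin 3) on generators a, b, c such that φ(a) = w_a, φ(b) = w_b, and φ(c) = w_c. (This is the assertion, implicit in the proof of the Main Theorem for rank 3, that the explicitly given map g on the rank-3 rose is a homotopy equivalence, i.e. induces an automorphism of F₃.) -/
set_option maxRecDepth 10000


noncomputable section

/-- The free group of rank 3. -/
abbrev F3 := FreeGroup (Fin 3)

/-- The generator `a`. -/
def a : F3 := FreeGroup.of 0
/-- The generator `b`. -/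
def b : F3 := FreeGroup.of 1
/-- The generator `c`. -/
def c : F3 := FreeGroup.of 2

/-- The word `w_a`. -/
def wa : F3 :=
  a*b*a*b⁻¹*a*a*c*b⁻¹*a*b*a*b⁻¹*a*a*c*b*a*b*a*b⁻¹*a*a*c*a*b*a*b⁻¹*a*a*c*b⁻¹*a

/-- The word `w_b`. -/
def wb : F3 :=
  b*a*b*a*b⁻¹*a*a*c*a⁻¹*b*c⁻¹*a⁻¹*a⁻¹*b*a⁻¹*b⁻¹*a⁻¹*c⁻¹*a⁻¹*a⁻¹*b*a⁻¹*b⁻¹*a⁻¹*b⁻¹*c⁻¹*a⁻¹*a⁻¹*b*a⁻¹*b⁻¹*a⁻¹*b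

/-- The word `w_c`. -/
def wc : F3 := a*b*a*b⁻¹*a*a*c


/-- Inverse image of `b`. -/
def pb : F3 := b*c⁻¹*a*c⁻¹
/-- Inverse image of `a`. -/
def pa : F3 := pb*c⁻¹*c⁻¹*pb⁻¹*c⁻¹*pb*c⁻¹*a
/-- Inverse image of `c`. -/
def pc : F3 := pa⁻¹*pa⁻¹*pb*pa⁻¹*pb⁻¹*pa⁻¹*c

def fwd : F3 →* F3 := FreeGroup.lift (fun i => if i = 0 then wa else if i = 1 then wb else wc)
def bwd : F3 →* F3 := FreeGroup.lift (fun i => if i = 0 then pa else if i = 1 then pb else pc)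

lemma fwd_a : fwd a = wa := by simp [fwd, a]
lemma fwd_b : fwd b = wb := by simp [fwd, b]
lemma fwd_c : fwd c = wc := by simp [fwd, c]
lemma bwd_a : bwd a = pa := by simp [bwd, a]
lemma bwd_b : bwd b = pb := by simp [bwd, b]
lemma bwd_c : bwd c = pc := by simp [bwd, c]

lemma bwd_wa : bwd wa = a := by
  rw [wa]; simp only [map_mul, map_inv, bwd_a, bwd_b, bwd_c]; decide
lemma bwd_wb : bwd wb = b := by
  rw [wb]; simp only [map_mul, map_inv, bwd_a, bwd_b, bwd_c]; decide
lemma bwd_wc : bwd wc = c := by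
  rw [wc]; simp only [map_mul, map_inv, bwd_a, bwd_b, bwd_c]; decide
lemma fwd_pa : fwd pa = a := by
  rw [pa, pb]; simp only [map_mul, map_inv, fwd_a, fwd_b, fwd_c]; decide
lemma fwd_pb : fwd pb = b := by
  rw [pb]; simp only [map_mul, map_inv, fwd_a, fwd_b, fwd_c]; decide
lemma fwd_pc : fwd pc = c := by
  rw [pc, pa, pb]; simp only [map_mul, map_inv, fwd_a, fwd_b, fwd_c]; decide

lemma bf : bwd.comp fwd = MonoidHom.id F3 := by
  apply FreeGroup.ext_hom
  intro i
  fin_cases i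
  · show bwd (fwd a) = a; rw [fwd_a, bwd_wa]
  · show bwd (fwd b) = b; rw [fwd_b, bwd_wb]
  · show bwd (fwd c) = c; rw [fwd_c, bwd_wc]

lemma fb : fwd.comp bwd = MonoidHom.id F3 := by
  apply FreeGroup.ext_hom
  intro i
  fin_cases i
  · show fwd (bwd a) = a; rw [bwd_a, fwd_pa]
  · show fwd (bwd b) = b; rw [bwd_b, fwd_pb]
  · show fwd (bwd c) = c; rw [bwd_c, fwd_pc]

/-- There exists an automorphism of `F₃` sending `a ↦ w_a`, `b ↦ w_b`, `c ↦ w_c`. -/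
theorem exists_automorphism_rank3 :
    ∃ φ : F3 ≃* F3, φ a = wa ∧ φ b = wb ∧ φ c = wc := by
  exact ⟨MonoidHom.toMulEquiv fwd bwd bf fb, fwd_a, fwd_b, fwd_c⟩
end
end

section
/- For the automorphism φ of F₃ determined by a ↦ w_a, b ↦ w_b, c ↦ w_c, no positive power of φ is an inner automorphism: for every integer n ≥ 1 there is no u ∈ F₃ with φⁿ(x) = u·x·u⁻¹ for all x ∈ F₃. In particular φ represents an element of infinite order in Out(F₃). (Consequence of the full irreducibility of φ established in the Main Theorem for rank 3.) -/
noncomputable section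

/-! ### Auxiliary machinery: abelianization matrix and trace growth -/

/-- The matrix induced by `φ` on the abelianization `ℤ³` (columns are the
exponent vectors of `w_a`, `w_b`, `w_c`). -/
def M : Matrix (Fin 3) (Fin 3) ℤ := !![17,-9,4; -1,2,0; 4,-2,1]

lemma M_sq : M ^ 2 = !![314,-179,72; -19,13,-4; 74,-42,17] := by
  rw [sq]
  ext i j
  fin_cases i <;> fin_cases j <;> simp [M, Matrix.mul_apply, Fin.sum_univ_three]

/-- Cayley–Hamilton for `M` (char. poly `λ³ - 20λ² + 28λ - 1`). -/
lemma M_cube : M ^ 3 = (20:ℤ) • M ^ 2 - (28:ℤ) • M + 1 := by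
  have h3 : M ^ 3 = M ^ 2 * M := by rw [pow_succ]
  rw [h3, M_sq]
  ext i j
  fin_cases i <;> fin_cases j <;>
    simp [M, M_sq, Matrix.mul_apply, Fin.sum_univ_three, Matrix.one_apply]

/-- Traces of powers of `M`. -/
def t (n : ℕ) : ℤ := (M ^ n).trace

lemma t0 : t 0 = 3 := by simp [t, Matrix.trace]
lemma t1 : t 1 = 20 := by simp [t, Matrix.trace_fin_three, M]
lemma t2 : t 2 = 344 := by simp [t, M_sq, Matrix.trace_fin_three]

lemma t_rec (n : ℕ) : t (n + 3) = 20 * t (n + 2) - 28 * t (n + 1) + t n := by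
  have hm : M ^ (n + 3) = (20:ℤ) • M ^ (n + 2) - (28:ℤ) • M ^ (n + 1) + M ^ n := by
    have : M ^ (n + 3) = M ^ n * M ^ 3 := by rw [← pow_add]
    rw [this, M_cube, mul_add, mul_sub, mul_smul_comm, mul_smul_comm, mul_one,
      ← pow_add, ← pow_succ]
  rw [t, t, t, t, hm]
  rw [Matrix.trace_add, Matrix.trace_sub, Matrix.trace_smul, Matrix.trace_smul]
  simp [smul_eq_mul]

lemma t_grow : ∀ n : ℕ, 3 ≤ t n ∧ 2 * t n ≤ t (n + 1) ∧ 2 * t (n + 1) ≤ t (n + 2) := by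
  intro n
  induction n with
  | zero => refine ⟨by rw [t0], by rw [t0, t1]; norm_num, by rw [t1, t2]; norm_num⟩
  | succ n IH =>
    obtain ⟨h1, h2, h3⟩ := IH
    have hr := t_rec n
    refine ⟨by linarith, h3, by nlinarith⟩

lemma t_ge (n : ℕ) : 20 ≤ t (n + 1) := by
  induction n with
  | zero => rw [t1]
  | succ n IH =>
    have := (t_grow n).2.2
    have h := (t_grow (n+1)).1
    linarith

lemma Mpow_ne_one (n : ℕ) (hn : 1 ≤ n) : M ^ n ≠ 1 := by
  intro h
  obtain ⟨m, rfl⟩ : ∃ m, n = m + 1 := ⟨n - 1, by omega⟩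
  have := t_ge m
  rw [t, h, Matrix.trace_one] at this
  simp at this

/-- The abelianization homomorphism `F₃ →* ℤ³` (written multiplicatively). -/
def ψ : F3 →* Multiplicative (Fin 3 → ℤ) :=
  FreeGroup.lift (fun i => Multiplicative.ofAdd (Pi.single i (1:ℤ)))

/-- The abelianized action of `φ ^ n` is given by `M ^ n`. -/
lemma key (φ : MulAut F3) (ha : φ a = wa) (hb : φ b = wb) (hc : φ c = wc) :
    ∀ n : ℕ, ∀ j : Fin 3,
      ψ ((φ ^ n : MulAut F3) (FreeGroup.of j)) = Multiplicative.ofAdd (fun i => (M ^ n) i j) := by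
  intro n
  induction n with
  | zero =>
    intro j
    simp only [pow_zero, MulAut.one_apply, ψ, FreeGroup.lift_apply_of]
    refine congrArg Multiplicative.ofAdd ?_
    funext i
    simp [Pi.single_apply, Matrix.one_apply]
  | succ n IH =>
    have IH0 := IH 0
    have IH1 := IH 1
    have IH2 := IH 2
    have hstep : ∀ j : Fin 3, (φ ^ (n+1) : MulAut F3) (FreeGroup.of j)
        = (φ ^ n : MulAut F3) (φ (FreeGroup.of j)) := by
      intro j; rw [pow_succ]; rfl
    have h0 : ψ ((φ ^ (n+1) : MulAut F3) (FreeGroup.of (0 : Fin 3)))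
        = Multiplicative.ofAdd (fun i => (M ^ (n+1)) i 0) := by
      rw [hstep 0, show FreeGroup.of (0 : Fin 3) = a from rfl, ha]
      unfold wa a b c
      simp only [map_mul, map_inv, IH0, IH1, IH2, ← ofAdd_neg, ← ofAdd_add]
      refine congrArg Multiplicative.ofAdd ?_
      funext i
      rw [pow_succ, Matrix.mul_apply, Fin.sum_univ_three]
      simp [M]
      ring
    have h1 : ψ ((φ ^ (n+1) : MulAut F3) (FreeGroup.of (1 : Fin 3)))
        = Multiplicative.ofAdd (fun i => (M ^ (n+1)) i 1) := by
      rw [hstep 1, show FreeGroup.of (1 : Fin 3) = b from rfl, hb]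
      unfold wb a b c
      simp only [map_mul, map_inv, IH0, IH1, IH2, ← ofAdd_neg, ← ofAdd_add]
      refine congrArg Multiplicative.ofAdd ?_
      funext i
      rw [pow_succ, Matrix.mul_apply, Fin.sum_univ_three]
      simp [M]
      ring
    have h2 : ψ ((φ ^ (n+1) : MulAut F3) (FreeGroup.of (2 : Fin 3)))
        = Multiplicative.ofAdd (fun i => (M ^ (n+1)) i 2) := by
      rw [hstep 2, show FreeGroup.of (2 : Fin 3) = c from rfl, hc]
      unfold wc a b c
      simp only [map_mul, map_inv, IH0, IH1, IH2, ← ofAdd_neg, ← ofAdd_add]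
      refine congrArg Multiplicative.ofAdd ?_
      funext i
      rw [pow_succ, Matrix.mul_apply, Fin.sum_univ_three]
      simp [M]
      ring
    intro j
    fin_cases j
    exacts [h0, h1, h2]

/-- No positive power of the automorphism `φ` of `F₃` with `a ↦ w_a`, `b ↦ w_b`,
`c ↦ w_c` is an inner automorphism; in particular `φ` has infinite order in `Out(F₃)`. -/
theorem no_power_inner_rank3 (φ : MulAut F3)
    (ha : φ a = wa) (hb : φ b = wb) (hc : φ c = wc) :
    ∀ n : ℕ, 1 ≤ n → ¬ ∃ u : F3, ∀ x : F3, (φ ^ n : MulAut F3) x = u * x * u⁻¹ := by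
  rintro n hn ⟨u, hu⟩
  have hM : M ^ n = 1 := by
    ext i j
    have hkey := key φ ha hb hc n j
    have hx : ψ ((φ ^ n : MulAut F3) (FreeGroup.of j)) = ψ (FreeGroup.of j) := by
      rw [hu (FreeGroup.of j), map_mul, map_mul, map_inv,
        mul_comm (ψ u) (ψ (FreeGroup.of j)), mul_inv_cancel_right]
    rw [hkey] at hx
    have hψof : ψ (FreeGroup.of j) = Multiplicative.ofAdd (Pi.single j (1:ℤ)) :=
      FreeGroup.lift_apply_of
    rw [hψof] at hx
    have hfun := congrFun (Multiplicative.ofAdd.injective hx) i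
    rw [hfun, Matrix.one_apply, Pi.single_apply]
  exact Mpow_ne_one n hn hM
end
end

section
/- (Birecurrency of the complete-graph ltt structures.) For every integer r ≥ 3 and every j with 1 ≤ j ≤ 2r−2, the graph 𝒢_j is birecurrent: there exist an integer m ≥ 1 and a closed walk v_0, v_1, …, v_{2m} = v_0 on the vertex set {x_1, …, x_{2r}} such that for every l < m the unordered pair {v_{2l}, v_{2l+1}} is a colored edge of 𝒢_j and {v_{2l+1}, v_{2l+2}} is a black edge of 𝒢_j, every colored edge of 𝒢_j equals {v_{2l}, v_{2l+1}} for some l < m, and every black edge of 𝒢_j equals {v_{2l+1}, v_{2l+2}} for some l < m. (Such a closed walk, alternating between colored and black edges and traversing every edge, is a smooth loop through all edges; repeating it gives the locally smoothly embedded bi-infinite line required for birecurrency.) -/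
/-- The vertices of the ltt structure `𝒢_j`: `x_1, …, x_{2r}` are encoded as the
elements `0, …, 2r-1` of `Fin (2*r)` (so `x_t` corresponds to `t-1`). -/
abbrev Vtx (r : ℕ) := Fin (2 * r)

/-- The colored edges of `𝒢_j`: all 2-element subsets of the purple vertices
`x_1, …, x_{2r-1}` (indices `0, …, 2r-2`), together with the red edge
`{x_j, x_{2r}}` (indices `j-1` and `2r-1`). -/
def coloredEdge (r j : ℕ) (u v : Vtx r) : Prop :=
  u ≠ v ∧ ((u.val ≤ 2 * r - 2 ∧ v.val ≤ 2 * r - 2) ∨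
    (u.val = j - 1 ∧ v.val = 2 * r - 1) ∨ (u.val = 2 * r - 1 ∧ v.val = j - 1))

/-- The black edges of `𝒢_j`: the edge pairs `{x_{2t-1}, x_{2t}}`, i.e. the pairs of
distinct indices with the same quotient upon division by 2. -/
def blackEdge (r : ℕ) (u v : Vtx r) : Prop :=
  u ≠ v ∧ u.val / 2 = v.val / 2

namespace BirecAux

def bar (n : ℕ) : ℕ := 2 * (n / 2) + 1 - n % 2

lemma bar_bar (n : ℕ) : bar (bar n) = n := by unfold bar; omega

def pick2 (a b : ℕ) : ℕ :=
  if a ≠ 0 ∧ b ≠ 0 then 0 else if a ≠ 1 ∧ b ≠ 1 then 1 else 2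

lemma pick2_spec (a b : ℕ) : pick2 a b ≠ a ∧ pick2 a b ≠ b ∧ pick2 a b ≤ 2 := by
  unfold pick2; split_ifs <;> omega

def nxt (r u : ℕ) : ℕ := if u = 2*r - 3 then 0 else u + 1

def blk (r j u i : ℕ) : ℕ :=
  if i = 4*r - 3 then 2*r - 1
  else if i = 4*r - 2 then bar (j - 1)
  else if i = 4*r - 1 then pick2 (j-1) (bar (nxt r u))
  else if i % 2 = 0 then u
  else bar (if i / 2 = u then bar u else i / 2)

def cur (r j n : ℕ) : ℕ := blk r j (n / (4*r)) (n % (4*r))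


def wk (r j n : ℕ) : ℕ :=
  if n % 2 = 0 then cur r j ((n/2) % (4*r*(2*r-2)))
  else bar (cur r j ((n/2 + 1) % (4*r*(2*r-2))))

lemma cur_eq (r j u i : ℕ) (hr : 0 < r) (hi : i < 4*r) :
    cur r j (4*r*u + i) = blk r j u i := by
  unfold cur
  rw [Nat.mul_add_div (by omega), Nat.mul_add_mod, Nat.div_eq_of_lt hi,
    Nat.mod_eq_of_lt hi, Nat.add_zero]

lemma lt_M (r u i : ℕ) (hu : u ≤ 2*r-3) (hi : i < 4*r) (hr : 3 ≤ r) :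
    4*r*u + i < 4*r*(2*r-2) := by
  calc 4*r*u + i < 4*r*u + 4*r := Nat.add_lt_add_left hi _
    _ = 4*r*(u+1) := by ring
    _ ≤ 4*r*(2*r-2) := Nat.mul_le_mul_left _ (by omega)

lemma blk_even (r j u i : ℕ) (hr : 3 ≤ r) (hi : i ≤ 4*r-4) (h2 : i % 2 = 0) :
    blk r j u i = u := by
  unfold blk
  rw [if_neg (by omega), if_neg (by omega), if_neg (by omega), if_pos h2]

lemma blk_odd (r j u i : ℕ) (hr : 3 ≤ r) (hi : i ≤ 4*r-4) (h2 : i % 2 = 1) :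
    blk r j u i = bar (if i / 2 = u then bar u else i / 2) := by
  unfold blk
  rw [if_neg (by omega), if_neg (by omega), if_neg (by omega), if_neg (by omega)]

lemma blk_A (r j u : ℕ) : blk r j u (4*r-3) = 2*r-1 := by
  unfold blk; rw [if_pos rfl]

lemma blk_B (r j u : ℕ) (hr : 3 ≤ r) : blk r j u (4*r-2) = bar (j-1) := by
  unfold blk; rw [if_neg (by omega), if_pos rfl]

lemma blk_C (r j u : ℕ) (hr : 3 ≤ r) :
    blk r j u (4*r-1) = pick2 (j-1) (bar (nxt r u)) := by
  unfold blk; rw [if_neg (by omega), if_neg (by omega), if_pos rfl]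

lemma step_ok (r j l : ℕ) (hr : 3 ≤ r) (hj1 : 1 ≤ j) (hj2 : j ≤ 2*r-2)
    (hl : l < 4*r*(2*r-2)) :
    cur r j l < 2*r ∧ cur r j ((l+1) % (4*r*(2*r-2))) < 2*r ∧
    cur r j l ≠ bar (cur r j ((l+1) % (4*r*(2*r-2)))) ∧
    ((cur r j l ≤ 2*r-2 ∧ bar (cur r j ((l+1) % (4*r*(2*r-2)))) ≤ 2*r-2) ∨
     (cur r j l = j-1 ∧ bar (cur r j ((l+1) % (4*r*(2*r-2)))) = 2*r-1) ∨
     (cur r j l = 2*r-1 ∧ bar (cur r j ((l+1) % (4*r*(2*r-2)))) = j-1)) := by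
  have h4 : 0 < 4*r := by omega
  obtain ⟨u, i, hu, hi, rfl⟩ : ∃ u i, u ≤ 2*r-3 ∧ i < 4*r ∧ l = 4*r*u + i := by
    refine ⟨l / (4*r), l % (4*r), ?_, Nat.mod_lt _ h4, (Nat.div_add_mod l (4*r)).symm⟩
    have := Nat.div_lt_of_lt_mul hl
    omega
  rw [cur_eq r j u i (by omega) hi]
  by_cases hC : i = 4*r-1
  · subst hC
    have hs : 4*r*u + (4*r-1) + 1 = 4*r*(u+1) := by
      have h1 : (4*r-1) + 1 = 4*r := by omega
      calc 4*r*u + (4*r-1) + 1 = 4*r*u + ((4*r-1)+1) := by ring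
        _ = 4*r*u + 4*r := by rw [h1]
        _ = 4*r*(u+1) := by ring
    rw [hs, blk_C r j u hr]
    have hnx : cur r j (4*r*(u+1) % (4*r*(2*r-2))) = nxt r u := by
      by_cases hu3 : u = 2*r-3
      · have he : u + 1 = 2*r-2 := by omega
        rw [he, Nat.mod_self]
        have h0 : cur r j 0 = blk r j 0 0 := by
          unfold cur; rw [Nat.zero_div, Nat.zero_mod]
        rw [h0, blk_even r j 0 0 hr (by omega) (by omega)]
        unfold nxt; rw [if_pos hu3]
      · have hlt : 4*r*(u+1) < 4*r*(2*r-2) := by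
          have := lt_M r (u+1) 0 (by omega) (by omega) hr
          rwa [Nat.add_zero] at this
        have hce := cur_eq r j (u+1) 0 (by omega) (by omega)
        rw [Nat.add_zero] at hce
        rw [Nat.mod_eq_of_lt hlt, hce, blk_even r j (u+1) 0 hr (by omega) (by omega)]
        unfold nxt; rw [if_neg hu3]
    rw [hnx]
    have hn : nxt r u ≤ 2*r-3 := by unfold nxt; split_ifs <;> omega
    have hp := pick2_spec (j-1) (bar (nxt r u))
    set x := nxt r u with hx
    set q := pick2 (j-1) (bar x) with hq
    have hb : bar x ≤ 2*r-2 := by unfold bar; omega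
    exact ⟨by omega, by omega, hp.2.1, Or.inl ⟨by omega, hb⟩⟩
  · have hi1 : i + 1 < 4*r := by omega
    have hlt : 4*r*u + (i+1) < 4*r*(2*r-2) := lt_M r u (i+1) hu hi1 hr
    rw [Nat.add_assoc, Nat.mod_eq_of_lt hlt, cur_eq r j u (i+1) (by omega) hi1]
    by_cases hA : i = 4*r-4
    · subst hA
      have h34 : 4*r-4+1 = 4*r-3 := by omega
      rw [h34, blk_even r j u _ hr (by omega) (by omega), blk_A]
      have hb : bar (2*r-1) = 2*r-2 := by unfold bar; omega
      rw [hb]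
      exact ⟨by omega, by omega, by omega, Or.inl ⟨by omega, by omega⟩⟩
    by_cases hB : i = 4*r-3
    · subst hB
      have h23 : 4*r-3+1 = 4*r-2 := by omega
      rw [h23, blk_A, blk_B r j u hr, bar_bar]
      have hb : bar (j-1) ≤ 2*r-2 := by unfold bar; omega
      exact ⟨by omega, by omega, by omega, Or.inr (Or.inr ⟨rfl, rfl⟩)⟩
    by_cases hB2 : i = 4*r-2
    · subst hB2
      have h12 : 4*r-2+1 = 4*r-1 := by omega
      rw [h12, blk_B r j u hr, blk_C r j u hr]
      have hn : nxt r u ≤ 2*r-3 := by unfold nxt; split_ifs <;> omega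
      have hp := pick2_spec (j-1) (bar (nxt r u))
      set q := pick2 (j-1) (bar (nxt r u)) with hq
      have hq2 : q ≤ 2 := hp.2.2
      have hqj : q ≠ j - 1 := hp.1
      unfold bar
      omega
    · -- pairs region : i ≤ 4*r-5
      have hile : i ≤ 4*r-5 := by omega
      by_cases hpar : i % 2 = 0
      · rw [blk_even r j u i hr (by omega) hpar,
          blk_odd r j u (i+1) hr (by omega) (by omega)]
        have hdiv : (i+1)/2 = i/2 := by omega
        rw [hdiv]
        by_cases hf : i/2 = u
        · rw [if_pos hf]; unfold bar; omega
        · rw [if_neg hf]; unfold bar; omega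
      · rw [blk_odd r j u i hr (by omega) (by omega),
          blk_even r j u (i+1) hr (by omega) (by omega)]
        by_cases hf : i/2 = u
        · rw [if_pos hf]; unfold bar; omega
        · rw [if_neg hf]; unfold bar; omega



lemma bar_ne (n : ℕ) : bar n ≠ n := by unfold bar; omega

lemma bar_div (n : ℕ) : bar n / 2 = n / 2 := by unfold bar; omega

lemma wk_even (r j l : ℕ) : wk r j (2*l) = cur r j (l % (4*r*(2*r-2))) := by
  unfold wk
  rw [if_pos (by omega)]
  congr 2; omega

lemma wk_odd (r j l : ℕ) : wk r j (2*l+1) = bar (cur r j ((l+1) % (4*r*(2*r-2)))) := by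
  unfold wk
  rw [if_neg (by omega)]
  congr 3; omega

end BirecAux


open BirecAux

/-- Birecurrency of the complete-graph ltt structures: for `r ≥ 3` and
`1 ≤ j ≤ 2r-2`, the graph `𝒢_j` carries a closed walk whose edges alternate between
colored and black edges and which traverses every colored edge and every black edge. -/
theorem birecurrent_complete_graph_ltt (r : ℕ) (hr : 3 ≤ r)
    (j : ℕ) (hj1 : 1 ≤ j) (hj2 : j ≤ 2 * r - 2) :
    ∃ m : ℕ, 1 ≤ m ∧ ∃ v : ℕ → Vtx r,
      v 0 = v (2 * m) ∧
      (∀ l < m, coloredEdge r j (v (2 * l)) (v (2 * l + 1)) ∧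
        blackEdge r (v (2 * l + 1)) (v (2 * l + 2))) ∧
      (∀ u w : Vtx r, coloredEdge r j u w →
        ∃ l < m, (v (2 * l) = u ∧ v (2 * l + 1) = w) ∨
          (v (2 * l) = w ∧ v (2 * l + 1) = u)) ∧
      (∀ u w : Vtx r, blackEdge r u w →
        ∃ l < m, (v (2 * l + 1) = u ∧ v (2 * l + 2) = w) ∨
          (v (2 * l + 1) = w ∧ v (2 * l + 2) = u)) := by
  have h2r : 0 < 2*r := by omega
  have hM1 : 1 ≤ 4*r*(2*r-2) := Nat.mul_pos (by omega) (by omega)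
  set V : ℕ → Vtx r := fun n => ⟨wk r j n % (2*r), Nat.mod_lt _ h2r⟩ with hVdef
  have vval : ∀ n, (V n).val = wk r j n % (2*r) := fun n => rfl
  have Vval_even : ∀ l, l < 4*r*(2*r-2) → (V (2*l)).val = cur r j l % (2*r) := by
    intro l hl
    rw [vval, wk_even, Nat.mod_eq_of_lt hl]
  have Vval_odd : ∀ l, l + 1 < 4*r*(2*r-2) →
      (V (2*l+1)).val = bar (cur r j (l+1)) % (2*r) := by
    intro l hl
    rw [vval, wk_odd, Nat.mod_eq_of_lt hl]
  have Vval2 : ∀ l, l + 1 < 4*r*(2*r-2) →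
      (V (2*l+2)).val = cur r j (l+1) % (2*r) := by
    intro l hl
    have e : 2*l+2 = 2*(l+1) := by ring
    rw [vval, e, wk_even, Nat.mod_eq_of_lt hl]
  refine ⟨4*r*(2*r-2), hM1, V, ?_, ?_, ?_, ?_⟩
  · -- closed
    apply Fin.ext
    show wk r j (2*0) % (2*r) = wk r j (2*(4*r*(2*r-2))) % (2*r)
    rw [wk_even, wk_even, Nat.zero_mod, Nat.mod_self]
  · -- legality
    intro l hl
    obtain ⟨hc, hc', hne, hdisj⟩ := step_ok r j l hr hj1 hj2 hl
    set c := cur r j l with hcdef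
    set c' := cur r j ((l+1) % (4*r*(2*r-2))) with hc'def
    have w1 : wk r j (2*l) = c := by rw [wk_even, Nat.mod_eq_of_lt hl]
    have w2 : wk r j (2*l+1) = bar c' := by rw [wk_odd]
    have w3 : wk r j (2*l+2) = c' := by
      have e : 2*l+2 = 2*(l+1) := by ring
      rw [e, wk_even]
    have hbc' : bar c' < 2*r := by unfold bar; omega
    have V1 : (V (2*l)).val = c := by rw [vval, w1, Nat.mod_eq_of_lt hc]
    have V2 : (V (2*l+1)).val = bar c' := by rw [vval, w2, Nat.mod_eq_of_lt hbc']
    have V3 : (V (2*l+2)).val = c' := by rw [vval, w3, Nat.mod_eq_of_lt hc']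
    refine ⟨⟨?_, ?_⟩, ⟨?_, ?_⟩⟩
    · intro h
      have := congrArg Fin.val h
      rw [V1, V2] at this
      exact hne this
    · rw [V1, V2]; exact hdisj
    · intro h
      have := congrArg Fin.val h
      rw [V2, V3] at this
      exact bar_ne c' this
    · rw [V2, V3]; exact bar_div c'
  · -- colored coverage
    intro u w hcw
    obtain ⟨hne, hdisj⟩ := hcw
    have hvne : u.val ≠ w.val := fun h => hne (Fin.ext h)
    have hu2r : u.val < 2*r := u.isLt
    have hw2r : w.val < 2*r := w.isLt
    rcases hdisj with ⟨ha, hb⟩ | ⟨ha, hb⟩ | ⟨ha, hb⟩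
    · -- purple
      by_cases h2 : w.val ≤ 2*r-3
      · by_cases h1 : u.val ≤ 2*r-3
        · -- generic pair
          refine ⟨4*r*(u.val) + 2*(w.val), lt_M r u.val (2*w.val) h1 (by omega) hr,
            Or.inl ⟨Fin.ext ?_, Fin.ext ?_⟩⟩
          · rw [Vval_even _ (lt_M r u.val (2*w.val) h1 (by omega) hr),
              cur_eq r j u.val (2*w.val) (by omega) (by omega),
              blk_even r j u.val (2*w.val) hr (by omega) (by omega),
              Nat.mod_eq_of_lt hu2r]
          · have hl1 : 4*r*u.val + 2*w.val + 1 < 4*r*(2*r-2) := by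
              rw [Nat.add_assoc]; exact lt_M r u.val (2*w.val+1) h1 (by omega) hr
            rw [Vval_odd _ hl1, Nat.add_assoc,
              cur_eq r j u.val (2*w.val+1) (by omega) (by omega),
              blk_odd r j u.val (2*w.val+1) hr (by omega) (by omega)]
            have hq : (2*w.val+1)/2 = w.val := by omega
            rw [hq, if_neg (fun h => hvne (by omega)), bar_bar,
              Nat.mod_eq_of_lt hw2r]
        · -- u.val = 2r-2, w.val ≤ 2r-3 : use block w.val, offset 4r-4, swapped
          have hu22 : u.val = 2*r-2 := by omega
          refine ⟨4*r*(w.val) + (4*r-4), lt_M r w.val (4*r-4) h2 (by omega) hr,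
            Or.inr ⟨Fin.ext ?_, Fin.ext ?_⟩⟩
          · rw [Vval_even _ (lt_M r w.val (4*r-4) h2 (by omega) hr),
              cur_eq r j w.val (4*r-4) (by omega) (by omega),
              blk_even r j w.val (4*r-4) hr (by omega) (by omega),
              Nat.mod_eq_of_lt hw2r]
          · have hl1 : 4*r*w.val + (4*r-4) + 1 < 4*r*(2*r-2) := by
              rw [Nat.add_assoc]; exact lt_M r w.val (4*r-4+1) h2 (by omega) hr
            rw [Vval_odd _ hl1, Nat.add_assoc,
              cur_eq r j w.val (4*r-4+1) (by omega) (by omega),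
              show 4*r-4+1 = 4*r-3 from by omega, blk_A]
            have : bar (2*r-1) = 2*r-2 := by unfold bar; omega
            rw [this, Nat.mod_eq_of_lt (by omega)]
            omega
      · -- w.val = 2r-2 : use block u.val, offset 4r-4
        have hw22 : w.val = 2*r-2 := by omega
        have h1 : u.val ≤ 2*r-3 := by omega
        refine ⟨4*r*(u.val) + (4*r-4), lt_M r u.val (4*r-4) h1 (by omega) hr,
          Or.inl ⟨Fin.ext ?_, Fin.ext ?_⟩⟩
        · rw [Vval_even _ (lt_M r u.val (4*r-4) h1 (by omega) hr),
            cur_eq r j u.val (4*r-4) (by omega) (by omega),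
            blk_even r j u.val (4*r-4) hr (by omega) (by omega),
            Nat.mod_eq_of_lt hu2r]
        · have hl1 : 4*r*u.val + (4*r-4) + 1 < 4*r*(2*r-2) := by
            rw [Nat.add_assoc]; exact lt_M r u.val (4*r-4+1) h1 (by omega) hr
          rw [Vval_odd _ hl1, Nat.add_assoc,
            cur_eq r j u.val (4*r-4+1) (by omega) (by omega),
            show 4*r-4+1 = 4*r-3 from by omega, blk_A]
          have : bar (2*r-1) = 2*r-2 := by unfold bar; omega
          rw [this, Nat.mod_eq_of_lt (by omega)]
          omega
    · -- red, u = x_j side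
      have hz : 4*r*0 + (4*r-3) = 4*r-3 := by rw [Nat.mul_zero, Nat.zero_add]
      have hz1 : 4*r*0 + (4*r-2) = 4*r-2 := by rw [Nat.mul_zero, Nat.zero_add]
      have hlM : (4*r-3) < 4*r*(2*r-2) := by
        have := lt_M r 0 (4*r-3) (by omega) (by omega) hr
        rwa [hz] at this
      have hl1M : (4*r-3) + 1 < 4*r*(2*r-2) := by
        have := lt_M r 0 (4*r-2) (by omega) (by omega) hr
        rw [hz1] at this
        omega
      have e1 : cur r j (4*r-3) = 2*r-1 := by
        rw [← hz, cur_eq r j 0 (4*r-3) (by omega) (by omega), blk_A]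
      have e2 : cur r j ((4*r-3)+1) = bar (j-1) := by
        rw [show (4*r-3)+1 = 4*r-2 from by omega, ← hz1,
          cur_eq r j 0 (4*r-2) (by omega) (by omega), blk_B r j 0 hr]
      refine ⟨4*r-3, hlM, Or.inr ⟨Fin.ext ?_, Fin.ext ?_⟩⟩
      · rw [Vval_even _ hlM, e1, Nat.mod_eq_of_lt (by omega)]
        omega
      · rw [Vval_odd _ hl1M, e2, bar_bar, Nat.mod_eq_of_lt (by omega)]
        omega
    · -- red, u = x_{2r} side
      have hz : 4*r*0 + (4*r-3) = 4*r-3 := by rw [Nat.mul_zero, Nat.zero_add]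
      have hz1 : 4*r*0 + (4*r-2) = 4*r-2 := by rw [Nat.mul_zero, Nat.zero_add]
      have hlM : (4*r-3) < 4*r*(2*r-2) := by
        have := lt_M r 0 (4*r-3) (by omega) (by omega) hr
        rwa [hz] at this
      have hl1M : (4*r-3) + 1 < 4*r*(2*r-2) := by
        have := lt_M r 0 (4*r-2) (by omega) (by omega) hr
        rw [hz1] at this
        omega
      have e1 : cur r j (4*r-3) = 2*r-1 := by
        rw [← hz, cur_eq r j 0 (4*r-3) (by omega) (by omega), blk_A]
      have e2 : cur r j ((4*r-3)+1) = bar (j-1) := by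
        rw [show (4*r-3)+1 = 4*r-2 from by omega, ← hz1,
          cur_eq r j 0 (4*r-2) (by omega) (by omega), blk_B r j 0 hr]
      refine ⟨4*r-3, hlM, Or.inl ⟨Fin.ext ?_, Fin.ext ?_⟩⟩
      · rw [Vval_even _ hlM, e1, Nat.mod_eq_of_lt (by omega)]
        omega
      · rw [Vval_odd _ hl1M, e2, bar_bar, Nat.mod_eq_of_lt (by omega)]
        omega
  · -- black coverage
    intro u w hbw
    obtain ⟨hne, hdiv⟩ := hbw
    have hvne : u.val ≠ w.val := fun h => hne (Fin.ext h)
    have hu2r : u.val < 2*r := u.isLt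
    have hw2r : w.val < 2*r := w.isLt
    by_cases hp : u.val / 2 ≤ r-2
    · set t := 2*(u.val/2) with htdef
      have ht : t ≤ 2*r-4 := by omega
      have hl : 4*r*t + 1 < 4*r*(2*r-2) := lt_M r t 1 (by omega) (by omega) hr
      have hl1 : 4*r*t + 1 + 1 < 4*r*(2*r-2) := by
        rw [Nat.add_assoc]; exact lt_M r t 2 (by omega) (by omega) hr
      have ec : cur r j (4*r*t + 1 + 1) = t := by
        rw [Nat.add_assoc, cur_eq r j t 2 (by omega) (by omega),
          blk_even r j t 2 hr (by omega) (by omega)]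
      have eodd : (V (2*(4*r*t+1)+1)).val = t + 1 := by
        rw [Vval_odd _ hl1, ec]
        have : bar t = t + 1 := by unfold bar; omega
        rw [this, Nat.mod_eq_of_lt (by omega)]
      have eev : (V (2*(4*r*t+1)+2)).val = t := by
        rw [Vval2 _ hl1, ec, Nat.mod_eq_of_lt (by omega)]
      have hpair : (u.val = t ∧ w.val = t+1) ∨ (u.val = t+1 ∧ w.val = t) := by omega
      rcases hpair with ⟨e1, e2⟩ | ⟨e1, e2⟩
      · exact ⟨4*r*t+1, hl, Or.inr ⟨Fin.ext (by rw [eodd]; omega),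
          Fin.ext (by rw [eev]; omega)⟩⟩
      · exact ⟨4*r*t+1, hl, Or.inl ⟨Fin.ext (by rw [eodd]; omega),
          Fin.ext (by rw [eev]; omega)⟩⟩
    · -- top pair {2r-2, 2r-1}
      have hz : 4*r*0 + (4*r-3) = 4*r-3 := by rw [Nat.mul_zero, Nat.zero_add]
      have hl : (4*r-4) < 4*r*(2*r-2) := by
        have := lt_M r 0 (4*r-4) (by omega) (by omega) hr
        rw [Nat.mul_zero, Nat.zero_add] at this
        exact this
      have hl1 : (4*r-4) + 1 < 4*r*(2*r-2) := by
        have := lt_M r 0 (4*r-3) (by omega) (by omega) hr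
        rw [hz] at this
        omega
      have ec : cur r j ((4*r-4)+1) = 2*r-1 := by
        rw [show (4*r-4)+1 = 4*r-3 from by omega, ← hz,
          cur_eq r j 0 (4*r-3) (by omega) (by omega), blk_A]
      have eodd : (V (2*(4*r-4)+1)).val = 2*r-2 := by
        rw [Vval_odd _ hl1, ec]
        have : bar (2*r-1) = 2*r-2 := by unfold bar; omega
        rw [this, Nat.mod_eq_of_lt (by omega)]
      have eev : (V (2*(4*r-4)+2)).val = 2*r-1 := by
        rw [Vval2 _ hl1, ec, Nat.mod_eq_of_lt (by omega)]
      have hpair : (u.val = 2*r-2 ∧ w.val = 2*r-1) ∨ (u.val = 2*r-1 ∧ w.val = 2*r-2) := by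
        omega
      rcases hpair with ⟨e1, e2⟩ | ⟨e1, e2⟩
      · exact ⟨4*r-4, hl, Or.inl ⟨Fin.ext (by rw [eodd]; omega),
          Fin.ext (by rw [eev]; omega)⟩⟩
      · exact ⟨4*r-4, hl, Or.inr ⟨Fin.ext (by rw [eodd]; omega),
          Fin.ext (by rw [eev]; omega)⟩⟩
end

section
/- For every integer r ≥ 3 there exist an integer m ≥ 1 and a walk v_0, v_1, …, v_{2m} on the vertex set {x_1, …, x_{2r−2}} such that for every l < m the pair {v_{2l}, v_{2l+1}} is a colored edge of the subgraph 𝒢_{1,…,2r−2} and {v_{2l+1}, v_{2l+2}} is a black edge of 𝒢_{1,…,2r−2}, and every colored edge and every black edge of 𝒢_{1,…,2r−2} occurs among these pairs (in the respective parity positions). That is, there is a smooth path traversing all edges of 𝒢_{1,…,2r−2}. (This is the path γ₁ constructed in the proof of the birecurrency lemma.) -/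
/-- The vertices of the subgraph `𝒢_{1,…,2r−2}`: `x_1, …, x_{2r-2}` are encoded as
the elements `0, …, 2r-3` of `Fin (2*(r-1))` (so `x_t` corresponds to `t-1`). -/
abbrev SubVtx (r : ℕ) := Fin (2 * (r - 1))

/-- The colored (purple) edges of `𝒢_{1,…,2r−2}`: all 2-element subsets of the
vertex set, i.e. the complete graph on `2r-2` vertices. -/
def subColoredEdge (r : ℕ) (u v : SubVtx r) : Prop := u ≠ v

/-- The black edges of `𝒢_{1,…,2r−2}`: the edge pairs `{x_{2t-1}, x_{2t}}`, i.e. the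
pairs of distinct indices with the same quotient upon division by 2. -/
def subBlackEdge (r : ℕ) (u v : SubVtx r) : Prop :=
  u ≠ v ∧ u.val / 2 = v.val / 2

/- ### Auxiliary combinatorial machinery -/

/-- The black partner: flip the last bit. -/
def bbar (x : ℕ) : ℕ := if x % 2 = 0 then x + 1 else x - 1

/-- First endpoint of the `k`-th colored target edge. -/
def uu (n k : ℕ) : ℕ := (k / (n - 1)) % n

/-- Second endpoint of the `k`-th colored target edge. -/
def ww (n k : ℕ) : ℕ := (uu n k + 1 + k % (n - 1)) % n

/-- The walk, as a function to ℕ. -/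
def VV (n j : ℕ) : ℕ :=
  if j % 4 = 0 then (if j / 4 = 0 then 0 else bbar (ww n (j / 4 - 1)))
  else if j % 4 = 1 then bbar (uu n (j / 4))
  else if j % 4 = 2 then uu n (j / 4)
  else ww n (j / 4)

lemma bbar_ne (x : ℕ) : bbar x ≠ x := by unfold bbar; split <;> omega

lemma bbar_div2 (x : ℕ) : bbar x / 2 = x / 2 := by unfold bbar; split <;> omega

lemma bbar_inj {x y : ℕ} (h : bbar x = bbar y) : x = y := by
  unfold bbar at h; split at h <;> split at h <;> omega

lemma bbar_lt {n x : ℕ} (hx : x < n) (hev : n % 2 = 0) : bbar x < n := by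
  unfold bbar; split <;> omega

lemma uu_lt {n : ℕ} (hn : 0 < n) (k : ℕ) : uu n k < n := Nat.mod_lt _ hn

lemma ww_lt {n : ℕ} (hn : 0 < n) (k : ℕ) : ww n k < n := Nat.mod_lt _ hn

lemma mod_ne {n : ℕ} (b : ℕ) {c : ℕ} (hc1 : 0 < c) (hc2 : c < n) :
    (b + c) % n ≠ b % n := by
  intro h
  rw [Nat.add_mod b c n, Nat.mod_eq_of_lt hc2] at h
  have hb : b % n < n := Nat.mod_lt _ (by omega)
  rcases lt_or_ge (b % n + c) n with h1 | h1
  · rw [Nat.mod_eq_of_lt h1] at h; omega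
  · rw [Nat.mod_eq_sub_mod h1, Nat.mod_eq_of_lt (by omega)] at h; omega

lemma VV_lt {n : ℕ} (h4 : 4 ≤ n) (hev : n % 2 = 0) (j : ℕ) : VV n j < n := by
  unfold VV
  split
  · split
    · omega
    · exact bbar_lt (ww_lt (by omega) _) hev
  · split
    · exact bbar_lt (uu_lt (by omega) _) hev
    · split
      · exact uu_lt (by omega) _
      · exact ww_lt (by omega) _

lemma VV_0 (n : ℕ) : VV n 0 = 0 := by unfold VV; norm_num

lemma VV_4k {n k : ℕ} (hk : 0 < k) : VV n (4 * k) = bbar (ww n (k - 1)) := by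
  unfold VV
  rw [show 4 * k % 4 = 0 by omega, show 4 * k / 4 = k by omega]
  simp [hk.ne']

lemma VV_4k1 (n k : ℕ) : VV n (4 * k + 1) = bbar (uu n k) := by
  unfold VV
  rw [show (4 * k + 1) % 4 = 1 by omega, show (4 * k + 1) / 4 = k by omega]
  norm_num

lemma VV_4k2 (n k : ℕ) : VV n (4 * k + 2) = uu n k := by
  unfold VV
  rw [show (4 * k + 2) % 4 = 2 by omega, show (4 * k + 2) / 4 = k by omega]
  norm_num

lemma VV_4k3 (n k : ℕ) : VV n (4 * k + 3) = ww n k := by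
  unfold VV
  rw [show (4 * k + 3) % 4 = 3 by omega, show (4 * k + 3) / 4 = k by omega]
  norm_num

/-- key values of `uu`/`ww` at `k = a*(n-1) + t` with `t < n-1`. -/
lemma uu_eval {n a t : ℕ} (h4 : 4 ≤ n) (ha : a < n) (ht : t < n - 1) :
    uu n (a * (n - 1) + t) = a := by
  unfold uu
  rw [show a * (n - 1) + t = t + a * (n - 1) by ring,
    Nat.add_mul_div_right _ _ (show 0 < n - 1 by omega),
    Nat.div_eq_of_lt ht]
  simpa using Nat.mod_eq_of_lt ha

lemma kmod_eval {n a t : ℕ} (h4 : 4 ≤ n) (ht : t < n - 1) :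
    (a * (n - 1) + t) % (n - 1) = t := by
  rw [show a * (n - 1) + t = t + a * (n - 1) by ring,
    Nat.add_mul_mod_self_right, Nat.mod_eq_of_lt ht]

lemma ww_eval {n a t : ℕ} (h4 : 4 ≤ n) (ha : a < n) (ht : t < n - 1) :
    ww n (a * (n - 1) + t) = (a + 1 + t) % n := by
  unfold ww
  rw [uu_eval h4 ha ht, kmod_eval h4 ht]

/-- The colored step inside a pair: `uu ≠ ww`. -/
lemma uu_ne_ww {n : ℕ} (h4 : 4 ≤ n) (k : ℕ) : uu n k ≠ ww n k := by
  have hu : uu n k < n := uu_lt (by omega) k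
  have hkm : k % (n - 1) < n - 1 := Nat.mod_lt _ (by omega)
  have := mod_ne (n := n) (uu n k) (c := 1 + k % (n - 1)) (by omega) (by omega)
  unfold ww
  rw [show uu n k + 1 + k % (n - 1) = uu n k + (1 + k % (n - 1)) by ring]
  rw [Nat.mod_eq_of_lt hu] at this
  exact fun h => this h.symm

/-- The connecting colored step between pairs: `ww (k-1) ≠ uu k`. -/
lemma ww_ne_uu {n k : ℕ} (h4 : 4 ≤ n) (hk : 0 < k) :
    ww n (k - 1) ≠ uu n k := by
  set i := (k - 1) / (n - 1) with hi
  set t := (k - 1) % (n - 1) with htdef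
  have ht : t < n - 1 := Nat.mod_lt _ (by omega)
  have hdm : (n - 1) * i + t = k - 1 := Nat.div_add_mod (k - 1) (n - 1)
  have hww : ww n (k - 1) = (i + (1 + t)) % n := by
    unfold ww uu
    rw [← hi, ← htdef, show i % n + 1 + t = i % n + (1 + t) by ring,
      Nat.mod_add_mod]
  rcases Nat.lt_or_ge (t + 1) (n - 1) with h1 | h1
  · have hkd : k / (n - 1) = i := by
      rw [show k = (n - 1) * i + (t + 1) by omega,
        Nat.mul_add_div (show 0 < n - 1 by omega), Nat.div_eq_of_lt h1, Nat.add_zero]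
    have huu : uu n k = i % n := by unfold uu; rw [hkd]
    rw [hww, huu]
    exact mod_ne i (by omega) (by omega)
  · have h2 : t + 1 = n - 1 := by omega
    have hkd : k / (n - 1) = i + 1 := by
      have hexp : (n - 1) * (i + 1) = (n - 1) * i + (n - 1) := by ring
      rw [show k = (n - 1) * (i + 1) by omega,
        Nat.mul_div_cancel_left _ (show 0 < n - 1 by omega)]
    have huu : uu n k = (i + 1) % n := by unfold uu; rw [hkd]
    have hww2 : ww n (k - 1) = ((i + 1) + (n - 2)) % n := by
      rw [hww]; congr 1; omega
    rw [hww2, huu]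
    exact mod_ne (i + 1) (by omega) (by omega)

/-- For every `r ≥ 3` there is a smooth walk (edges alternating colored, black)
traversing every colored edge and every black edge of `𝒢_{1,…,2r−2}`. -/
theorem exists_smooth_path_through_all_edges (r : ℕ) (hr : 3 ≤ r) :
    ∃ m : ℕ, 1 ≤ m ∧ ∃ v : ℕ → SubVtx r,
      (∀ l < m, subColoredEdge r (v (2 * l)) (v (2 * l + 1)) ∧
        subBlackEdge r (v (2 * l + 1)) (v (2 * l + 2))) ∧
      (∀ u w : SubVtx r, subColoredEdge r u w →
        ∃ l < m, (v (2 * l) = u ∧ v (2 * l + 1) = w) ∨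
          (v (2 * l) = w ∧ v (2 * l + 1) = u)) ∧
      (∀ u w : SubVtx r, subBlackEdge r u w →
        ∃ l < m, (v (2 * l + 1) = u ∧ v (2 * l + 2) = w) ∨
          (v (2 * l + 1) = w ∧ v (2 * l + 2) = u)) := by
  set n : ℕ := 2 * (r - 1) with hn
  have h4 : 4 ≤ n := by omega
  have hev : n % 2 = 0 := by omega
  set N : ℕ := n * (n - 1) with hN
  have hNpos : 0 < N := Nat.mul_pos (by omega) (by omega)
  refine ⟨2 * N, by omega, fun j => ⟨VV n j, VV_lt h4 hev j⟩, ?_, ?_, ?_⟩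
  · -- all steps are valid
    intro l hl
    rcases Nat.even_or_odd l with ⟨k, hk⟩ | ⟨k, hk⟩
    · subst hk
      constructor
      · -- colored edge (v (4k), v (4k+1))
        simp only [subColoredEdge, ne_eq, Fin.mk.injEq,
          show 2 * (k + k) = 4 * k by ring, show 2 * (k + k) + 1 = 4 * k + 1 by ring]
        rw [VV_4k1]
        rcases Nat.eq_zero_or_pos k with h0 | h0
        · subst h0
          rw [show 4 * 0 = 0 by norm_num, VV_0]
          have : uu n 0 = 0 := by unfold uu; simp
          rw [this]
          unfold bbar; norm_num
        · rw [VV_4k h0]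
          intro h
          exact ww_ne_uu h4 h0 (bbar_inj h)
      · -- black edge (v (4k+1), v (4k+2))
        simp only [subBlackEdge, ne_eq, Fin.mk.injEq,
          show 2 * (k + k) + 1 = 4 * k + 1 by ring,
          show 2 * (k + k) + 1 + 1 = 4 * k + 2 by ring]
        rw [VV_4k1, VV_4k2]
        exact ⟨bbar_ne _, bbar_div2 _⟩
    · subst hk
      constructor
      · -- colored edge (v (4k+2), v (4k+3))
        simp only [subColoredEdge, ne_eq, Fin.mk.injEq,
          show 2 * (2 * k + 1) = 4 * k + 2 by ring,
          show 2 * (2 * k + 1) + 1 = 4 * k + 3 by ring]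
        rw [VV_4k2, VV_4k3]
        exact uu_ne_ww h4 k
      · -- black edge (v (4k+3), v (4k+4))
        simp only [subBlackEdge, ne_eq, Fin.mk.injEq,
          show 2 * (2 * k + 1) + 1 = 4 * k + 3 by ring,
          show 2 * (2 * k + 1) + 1 + 1 = 4 * (k + 1) by ring]
        rw [VV_4k3, VV_4k (by omega)]
        rw [show k + 1 - 1 = k by omega]
        exact ⟨fun h => bbar_ne _ h.symm, (bbar_div2 _).symm⟩
  · -- all colored edges are traversed
    intro u w huw
    have hab : (u : ℕ) ≠ (w : ℕ) := fun h => huw (Fin.ext h)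
    have ha : (u : ℕ) < n := u.isLt
    have hb : (w : ℕ) < n := w.isLt
    set a := (u : ℕ)
    set b := (w : ℕ)
    -- choose t so that (a+1+t) % n = b, with t < n-1
    obtain ⟨t, ht, hwt⟩ : ∃ t, t < n - 1 ∧ (a + 1 + t) % n = b := by
      rcases Nat.lt_or_ge a b with h1 | h1
      · exact ⟨b - a - 1, by omega, by
          rw [show a + 1 + (b - a - 1) = b by omega]; exact Nat.mod_eq_of_lt hb⟩
      · have h2 : b < a := by omega
        exact ⟨b + n - a - 1, by omega, by
          rw [show a + 1 + (b + n - a - 1) = b + n by omega, Nat.add_mod_right]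
          exact Nat.mod_eq_of_lt hb⟩
    set k := a * (n - 1) + t with hk
    have hkN : k < N := by
      have h1 : k < (a + 1) * (n - 1) := by
        rw [add_mul, one_mul]; omega
      have h2 : (a + 1) * (n - 1) ≤ n * (n - 1) :=
        Nat.mul_le_mul_right _ (by omega)
      omega
    refine ⟨2 * k + 1, by omega, Or.inl ⟨?_, ?_⟩⟩
    · apply Fin.ext
      show VV n (2 * (2 * k + 1)) = a
      rw [show 2 * (2 * k + 1) = 4 * k + 2 by ring, VV_4k2, hk, uu_eval h4 ha ht]
    · apply Fin.ext
      show VV n (2 * (2 * k + 1) + 1) = b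
      rw [show 2 * (2 * k + 1) + 1 = 4 * k + 3 by ring, VV_4k3, hk,
        ww_eval h4 ha ht, hwt]
  · -- all black edges are traversed
    intro u w huw
    obtain ⟨hne, hdiv⟩ := huw
    have hab : (u : ℕ) ≠ (w : ℕ) := fun h => hne (Fin.ext h)
    have ha : (u : ℕ) < n := u.isLt
    have hbb : (w : ℕ) = bbar (u : ℕ) := by
      have := hdiv
      unfold bbar; split <;> omega
    set a := (u : ℕ)
    set k := a * (n - 1) with hk
    have hkN : k < N := by
      have h2 : (a + 1) * (n - 1) ≤ n * (n - 1) := Nat.mul_le_mul_right _ (by omega)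
      have h3 : (a + 1) * (n - 1) = a * (n - 1) + (n - 1) := by ring
      omega
    refine ⟨2 * k, by omega, Or.inr ⟨?_, ?_⟩⟩
    · apply Fin.ext
      show VV n (2 * (2 * k) + 1) = (w : ℕ)
      rw [show 2 * (2 * k) + 1 = 4 * k + 1 by ring, VV_4k1, hk,
        show a * (n - 1) = a * (n - 1) + 0 by omega, uu_eval h4 ha (by omega), hbb]
    · apply Fin.ext
      show VV n (2 * (2 * k) + 2) = a
      rw [show 2 * (2 * k) + 2 = 4 * k + 2 by ring, VV_4k2, hk,
        show a * (n - 1) = a * (n - 1) + 0 by omega, uu_eval h4 ha (by omega)]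
end

section
/- Let r ≥ 1 and let F = FreeGroup (Fin r) be the free group of rank r. Suppose A and B are subgroups of F with B ≠ ⊥ such that the canonical homomorphism from the free product (coproduct of groups) A ∗ B to F, induced by the two inclusion maps, is bijective (i.e. A is a free factor of F with nontrivial complementary factor B, so A is a proper free factor). Then A has infinite index in F, i.e. Subgroup.index A = 0. (This is the fact, used in the proof of the Full Irreducibility Criterion, that proper free factors of a finite-rank free group have infinite index.) -/
open Monoid

/-- A nontrivial free group is infinite. -/
lemma aux_infinite_of_isFreeGroup (G : Type*) [Group G] [IsFreeGroup G] [Nontrivial G] :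
    Infinite G := by
  obtain ⟨x, hx⟩ := exists_ne (1 : G)
  -- the generators type is nonempty
  have hne : Nonempty (IsFreeGroup.Generators G) := by
    by_contra hempty
    rw [not_nonempty_iff] at hempty
    have h1 : Subsingleton (FreeGroup (IsFreeGroup.Generators G)) := by infer_instance
    have h2 : Subsingleton G := (IsFreeGroup.mulEquiv G).symm.injective.subsingleton
    exact hx (Subsingleton.elim x 1)
  obtain ⟨i⟩ := hne
  -- surjection onto Multiplicative ℤ
  let f : G →* Multiplicative ℤ := IsFreeGroup.lift (fun _ => Multiplicative.ofAdd 1)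
  have hsurj : Function.Surjective f := by
    intro n
    refine ⟨(IsFreeGroup.of i) ^ (Multiplicative.toAdd n), ?_⟩
    rw [map_zpow, IsFreeGroup.lift_of]
    simp [← ofAdd_zsmul]
  exact Infinite.of_surjective f hsurj

/-- Free groups are torsion-free. -/
lemma aux_freeGroup_not_isOfFinOrder {α : Type*} {b : FreeGroup α} (hb : b ≠ 1) :
    ¬ IsOfFinOrder b := by
  intro hfin
  have hfinite : Finite (Subgroup.zpowers b) := hfin.finite_zpowers
  have hnt : Nontrivial (Subgroup.zpowers b) := by
    refine ⟨⟨⟨b, Subgroup.mem_zpowers b⟩, 1, ?_⟩⟩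
    simp [Subtype.ext_iff, hb]
  have : Infinite (Subgroup.zpowers b) := aux_infinite_of_isFreeGroup _
  exact this.not_finite hfinite

/-- A proper free factor of a finite-rank free group has infinite index: if `A` is a
subgroup of the free group `F` of rank `r` admitting a nontrivial complementary
subgroup `B` (i.e. the canonical homomorphism `A ∗ B →* F` induced by the inclusions
is bijective, with `B ≠ ⊥`), then `A` has infinite index in `F`. -/
theorem proper_free_factor_infinite_index (r : ℕ) (hr : 1 ≤ r)
    (A B : Subgroup (FreeGroup (Fin r))) (hB : B ≠ ⊥)
    (h : Function.Bijective (Monoid.Coprod.lift A.subtype B.subtype)) :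
    Subgroup.index A = 0 := by
  obtain ⟨b, hb1⟩ := Subgroup.ne_bot_iff_exists_ne_one.mp hB
  -- the map ℤ → F ⧸ A, n ↦ ⟦b ^ n⟧ is injective
  have hinj : Function.Injective
      (fun n : ℤ => (QuotientGroup.mk ((b : FreeGroup (Fin r)) ^ n) : FreeGroup (Fin r) ⧸ A)) := by
    intro j k hjk
    simp only [QuotientGroup.eq] at hjk
    have hmem : (b : FreeGroup (Fin r)) ^ (k - j) ∈ A := by
      rwa [← zpow_neg, ← zpow_add, neg_add_eq_sub] at hjk
    -- compare the two coproduct elements mapping to b ^ (k - j)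
    have key : Coprod.inl (⟨(b : FreeGroup (Fin r)) ^ (k - j), hmem⟩ : A)
        = Coprod.inr (b ^ (k - j)) := by
      apply h.injective
      rw [Coprod.lift_apply_inl, Coprod.lift_apply_inr]
      simp only [Subgroup.coe_subtype, Subgroup.coe_zpow]
    -- apply the retraction onto B
    have := congrArg (Coprod.lift (1 : A →* B) (MonoidHom.id B)) key
    rw [Coprod.lift_apply_inl, Coprod.lift_apply_inr] at this
    simp only [MonoidHom.one_apply, MonoidHom.id_apply] at this
    have hpow : (b : FreeGroup (Fin r)) ^ (k - j) = 1 := by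
      have h2 := congrArg (Subtype.val) this.symm
      rw [Subgroup.coe_zpow] at h2
      simpa using h2
    have hbne : (b : FreeGroup (Fin r)) ≠ 1 := by
      exact fun hh => hb1 (OneMemClass.coe_eq_one.mp hh)
    have : k - j = 0 := by
      by_contra hne
      exact aux_freeGroup_not_isOfFinOrder hbne
        (isOfFinOrder_iff_zpow_eq_one.mpr ⟨k - j, hne, hpow⟩)
    omega
  have : Infinite (FreeGroup (Fin r) ⧸ A) := Infinite.of_injective _ hinj
  exact Subgroup.index_eq_zero_iff_infinite.mpr this
end
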